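/- arXiv:2309.16326 — 3 statements merged into one kernel-verified Lean document; each statement's English description precedes it below -/
import Mathlib

section
/- Let $0 < \gamma < 1/2$ and let $d = (1 + \gamma \Delta t (\tilde\nu_{11} + \tilde\nu_{12}))^{-1}$ with $\Delta t, \tilde\nu_{11}, \tilde\nu_{12} > 0$. Suppose real numbers $f^\ell, f^{(1)}, \mathcal{K}_{11}^{(1)}, \mathcal{K}_{12}^{(1)}, \mathcal{K}_{11}^{(2)}, \mathcal{K}_{12}^{(2)}$ are all nonnegative, and $f^{(1)} = d f^\ell + d\gamma\Delta t(\tilde\nu_{11}\mathcal{K}_{11}^{(1)} + \tilde\nu_{12}\mathcal{K}_{12}^{(1)})$. If $\Delta t \le \frac{1}{(1 - 2\gamma)(\tilde\nu_{11} + \tilde\nu_{12})}$, then $f^{(2)} := d\,[f^\ell + \Delta t (1-\gamma)(\tilde\nu_{11}\mathcal{K}_{11}^{(1)} + \tilde\nu_{12}\mathcal{K}_{12}^{(1)} - (\tilde\nu_{11}+\tilde\nu_{12}) f^{(1)})] + d\gamma\Delta t(\tilde\nu_{11}\mathcal{K}_{11}^{(2)} + \tilde\nu_{12}\mathcal{K}_{12}^{(2)})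 \ge 0$. -/
/-- Positivity preservation of the second stage of the ARS(2,2,2) IMEX scheme. -/
theorem stmt_7 (γ Δt ν₁₁ ν₁₂ d fl f1 K₁₁a K₁₂a K₁₁b K₁₂b : ℝ)
    (hγ0 : 0 < γ) (hγ : γ < 1 / 2) (hΔt : 0 < Δt)
    (hν₁₁ : 0 < ν₁₁) (hν₁₂ : 0 < ν₁₂)
    (hd : d = (1 + γ * Δt * (ν₁₁ + ν₁₂))⁻¹)
    (hfl : 0 ≤ fl) (hf1 : 0 ≤ f1)
    (hK₁₁a : 0 ≤ K₁₁a) (hK₁₂a : 0 ≤ K₁₂a) (hK₁₁b : 0 ≤ K₁₁b) (hK₁₂b : 0 ≤ K₁₂b)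
    (hstage : f1 = d * fl + d * γ * Δt * (ν₁₁ * K₁₁a + ν₁₂ * K₁₂a))
    (hCFL : Δt ≤ 1 / ((1 - 2 * γ) * (ν₁₁ + ν₁₂))) :
    0 ≤ d * (fl + Δt * (1 - γ) * (ν₁₁ * K₁₁a + ν₁₂ * K₁₂a - (ν₁₁ + ν₁₂) * f1)) +
        d * γ * Δt * (ν₁₁ * K₁₁b + ν₁₂ * K₁₂b) := by
  have hA : (0:ℝ) < 1 + γ * Δt * (ν₁₁ + ν₁₂) := by positivity
  have hd0 : 0 < d := by rw [hd]; positivity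
  have hdA : d * (1 + γ * Δt * (ν₁₁ + ν₁₂)) = 1 := by
    rw [hd]; field_simp
  have hν : 0 < ν₁₁ + ν₁₂ := by linarith
  have hcfl' : Δt * ((1 - 2 * γ) * (ν₁₁ + ν₁₂)) ≤ 1 := by
    have h2 : 0 < (1 - 2 * γ) * (ν₁₁ + ν₁₂) := by nlinarith
    rw [le_div_iff₀ h2] at hCFL
    linarith
  subst hstage
  have hS : 0 ≤ ν₁₁ * K₁₁a + ν₁₂ * K₁₂a := by positivity
  have key : d * (fl + Δt * (1 - γ) * (ν₁₁ * K₁₁a + ν₁₂ * K₁₂a -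
      (ν₁₁ + ν₁₂) * (d * fl + d * γ * Δt * (ν₁₁ * K₁₁a + ν₁₂ * K₁₂a)))) =
      d ^ 2 * (fl * (1 - Δt * ((1 - 2 * γ) * (ν₁₁ + ν₁₂))) +
        Δt * (1 - γ) * (ν₁₁ * K₁₁a + ν₁₂ * K₁₂a)) := by
    have hAne : (1 + γ * Δt * (ν₁₁ + ν₁₂)) ≠ 0 := ne_of_gt hA
    rw [hd]; field_simp; ring
  rw [key]
  have h1 : 0 ≤ fl * (1 - Δt * ((1 - 2 * γ) * (ν₁₁ + ν₁₂))) +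
      Δt * (1 - γ) * (ν₁₁ * K₁₁a + ν₁₂ * K₁₂a) := by
    have : 0 ≤ 1 - Δt * ((1 - 2 * γ) * (ν₁₁ + ν₁₂)) := by linarith
    have h2 : 0 ≤ Δt * (1 - γ) * (ν₁₁ * K₁₁a + ν₁₂ * K₁₂a) := by
      apply mul_nonneg (mul_nonneg hΔt.le (by linarith)) hS
    nlinarith [mul_nonneg hfl this]
  positivity
end

section
/- Let $g : \mathbb{Z} \to \mathbb{R}$ with $g_i < 1$ for all $i$, let $m, \Delta x, \Delta t > 0$, $v \in \mathbb{R}$ with $\frac{3}{2}\frac{\Delta t}{m\Delta x}|v| \le 1$, and define $\phi_{i+1/2} = \operatorname{minmod}(g_i - g_{i-1}, g_{i+1} - g_i, g_{i+2} - g_{i+1})$. Then the second-order update $g_i^{new} = (1 - \frac{\Delta t}{m\Delta x}|v|)g_i + \frac{\Delta t}{m\Delta x}|v|\, g_{i-\operatorname{sign}(v)} + \frac{\Delta t}{m\Delta x}\frac{|v|}{2}(\phi_{i+1/2} - \phi_{i-1/2})$ satisfies $g_i^{new} < 1$ for all $i$. -/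
set_option maxHeartbeats 800000


/-- The minmod flux limiter. -/
noncomputable def minmod (a b c : ℝ) : ℝ :=
  if Real.sign a = Real.sign b ∧ Real.sign b = Real.sign c then
    Real.sign a * min |a| (min |b| |c|)
  else 0

lemma sign_mul_self' (a : ℝ) : Real.sign a * a = |a| := by
  rcases lt_trichotomy a 0 with h | h | h
  · rw [Real.sign_of_neg h, abs_of_neg h]; ring
  · simp [h]
  · rw [Real.sign_of_pos h, abs_of_pos h]; ring

lemma abs_sign_le (a : ℝ) : |Real.sign a| ≤ 1 := by
  rcases lt_trichotomy a 0 with h | h | h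
  · rw [Real.sign_of_neg h]; norm_num
  · simp [h]
  · rw [Real.sign_of_pos h]; norm_num

lemma minmod_facts (a b c : ℝ) :
    0 ≤ minmod a b c * a ∧ 0 ≤ minmod a b c * b ∧ 0 ≤ minmod a b c * c ∧
    |minmod a b c| ≤ |a| ∧ |minmod a b c| ≤ |b| ∧ |minmod a b c| ≤ |c| := by
  unfold minmod
  split
  · rename_i h
    obtain ⟨h1, h2⟩ := h
    set M := min |a| (min |b| |c|) with hM
    have hM0 : 0 ≤ M := le_min (abs_nonneg a) (le_min (abs_nonneg b) (abs_nonneg c))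
    have hMa : M ≤ |a| := min_le_left _ _
    have hMb : M ≤ |b| := le_trans (min_le_right _ _) (min_le_left _ _)
    have hMc : M ≤ |c| := le_trans (min_le_right _ _) (min_le_right _ _)
    have ha : Real.sign a * a = |a| := sign_mul_self' a
    have hb : Real.sign b * b = |b| := sign_mul_self' b
    have hc : Real.sign c * c = |c| := sign_mul_self' c
    have habs : |Real.sign a * M| ≤ M := by
      rw [abs_mul, abs_of_nonneg hM0]
      calc |Real.sign a| * M ≤ 1 * M := by
            exact mul_le_mul_of_nonneg_right (abs_sign_le a) hM0
        _ = M := one_mul M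
    refine ⟨?_, ?_, ?_, ?_, ?_, ?_⟩
    · have : Real.sign a * M * a = |a| * M := by rw [← ha]; ring
      rw [this]; exact mul_nonneg (abs_nonneg a) hM0
    · have : Real.sign a * M * b = |b| * M := by rw [h1, ← hb]; ring
      rw [this]; exact mul_nonneg (abs_nonneg b) hM0
    · have : Real.sign a * M * c = |c| * M := by rw [h1, h2, ← hc]; ring
      rw [this]; exact mul_nonneg (abs_nonneg c) hM0
    · exact habs.trans hMa
    · exact habs.trans hMb
    · exact habs.trans hMc
  · simp

/-- Fermion upper bound is preserved by the second-order flux-limited upwind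
transport step with CFL constant `2/3`. Here `φ i` denotes `φ_{i+1/2}`. -/
theorem stmt_11 (g : ℤ → ℝ) (hg : ∀ i, g i < 1)
    (m Δx Δt v : ℝ) (hm : 0 < m) (hΔx : 0 < Δx) (hΔt : 0 < Δt)
    (hCFL : 3 / 2 * (Δt / (m * Δx) * |v|) ≤ 1)
    (sgn : ℤ) (hsgn : sgn = if 0 < v then 1 else if v < 0 then -1 else 0)
    (φ : ℤ → ℝ)
    (hφ : ∀ i, φ i = minmod (g i - g (i - 1)) (g (i + 1) - g i) (g (i + 2) - g (i + 1)))
    (gnew : ℤ → ℝ)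
    (hnew : ∀ i, gnew i =
      (1 - Δt / (m * Δx) * |v|) * g i + Δt / (m * Δx) * |v| * g (i - sgn) +
        Δt / (m * Δx) * (|v| / 2) * (φ i - φ (i - 1))) :
    ∀ i, gnew i < 1 := by
  intro i
  set L : ℝ := Δt / (m * Δx) * |v| with hL
  have hL0 : 0 ≤ L := by
    apply mul_nonneg _ (abs_nonneg v)
    positivity
  have hL1 : 3 / 2 * L ≤ 1 := hCFL
  have hhalf : Δt / (m * Δx) * (|v| / 2) = L / 2 := by rw [hL]; ring
  rw [hnew i, hhalf]
  -- rewrite φ i and φ (i-1) with clean indices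
  have hφi : φ i = minmod (g i - g (i - 1)) (g (i + 1) - g i) (g (i + 2) - g (i + 1)) := hφ i
  have hφi1 : φ (i - 1) =
      minmod (g (i - 1) - g (i - 2)) (g i - g (i - 1)) (g (i + 1) - g i) := by
    have := hφ (i - 1)
    have e0 : i - 1 - 1 = i - 2 := by ring
    have e1 : i - 1 + 1 = i := by ring
    have e2 : i - 1 + 2 = i + 1 := by ring
    rw [e0, e1, e2] at this
    exact this
  obtain ⟨hpA, hpB, hpC, hpa, hpb, hpc⟩ :=
    minmod_facts (g i - g (i - 1)) (g (i + 1) - g i) (g (i + 2) - g (i + 1))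
  obtain ⟨hqA, hqB, hqC, hqa, hqb, hqc⟩ :=
    minmod_facts (g (i - 1) - g (i - 2)) (g i - g (i - 1)) (g (i + 1) - g i)
  rw [← hφi] at hpA hpB hpa hpb
  rw [← hφi1] at hqB hqC hqb hqc
  clear hφ hnew hφi hφi1 hpC hqA hpc hqa hCFL hhalf
  rcases lt_trichotomy v 0 with hv | hv | hv
  · -- v < 0 : upwind from i + 1
    have hsgn' : sgn = -1 := by rw [hsgn, if_neg (by linarith), if_pos hv]
    have hidx : i - sgn = i + 1 := by rw [hsgn']; ring
    rw [hidx]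
    set b := g (i + 1) - g i with hbdef
    have hg1 : g (i + 1) < 1 := hg (i + 1)
    have hgi : g i < 1 := hg i
    rcases le_or_gt 0 b with hb | hb
    · rw [abs_of_nonneg hb, abs_le] at hpb hqc
      have hq0 : 0 ≤ φ (i - 1) := by nlinarith [hqC, hqc.1, hqc.2]
      nlinarith [mul_nonneg hL0 hb, mul_nonneg hL0 hq0,
        mul_nonneg hL0 (sub_nonneg.2 hpb.2), mul_nonneg (sub_nonneg.2 hL1) (sub_nonneg.2 hg1.le)]
    · rw [abs_of_neg hb, abs_le] at hpb hqc
      have hp0 : φ i ≤ 0 := by nlinarith [hpB]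
      nlinarith [mul_nonneg hL0 (neg_nonneg.2 hb.le), mul_nonneg hL0 (neg_nonneg.2 hp0),
        mul_nonneg hL0 (sub_nonneg.2 (by linarith [hqc.1] : b ≤ φ (i - 1)))]
  · -- v = 0
    have hv0 : |v| = 0 := by rw [hv, abs_zero]
    have : L = 0 := by rw [hL, hv0, mul_zero]
    rw [this]
    have hsgn' : sgn = 0 := by rw [hsgn, hv]; norm_num
    rw [hsgn']
    simp only [sub_zero]
    have := hg i
    linarith [hg i]
  · -- v > 0 : upwind from i - 1
    have hsgn' : sgn = 1 := by rw [hsgn, if_pos hv]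
    rw [hsgn']
    set d := g i - g (i - 1) with hddef
    have hg1 : g (i - 1) < 1 := hg (i - 1)
    have hgi : g i < 1 := hg i
    rcases le_or_gt 0 d with hd | hd
    · rw [abs_of_nonneg hd, abs_le] at hpa hqb
      have hq0 : 0 ≤ φ (i - 1) := by nlinarith [hqB, hqb.1, hqb.2]
      nlinarith [mul_nonneg hL0 hd, mul_nonneg hL0 hq0,
        mul_nonneg hL0 (sub_nonneg.2 hpa.2), mul_nonneg (sub_nonneg.2 hL1) (sub_nonneg.2 hgi.le)]
    · rw [abs_of_neg hd, abs_le] at hpa hqb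
      have hp0 : φ i ≤ 0 := by nlinarith [hpA]
      nlinarith [mul_nonneg hL0 (neg_nonneg.2 hd.le), mul_nonneg hL0 (neg_nonneg.2 hp0),
        mul_nonneg hL0 (sub_nonneg.2 (by linarith [hqb.1] : d ≤ φ (i - 1))),
        mul_nonneg (sub_nonneg.2 hL1) (sub_nonneg.2 hgi.le),
        mul_nonneg (sub_nonneg.2 hL1) (sub_nonneg.2 hg1.le)]
end

section
/- Under the assumptions of the implicit relaxation update $f_k^* = d_k f_k^\ell + d_k\Delta t(\tilde\nu_{kk}\mathcal{K}_{kk}^* + \tilde\nu_{kj}\mathcal{K}_{kj}^*)$ for $k=1,2$, where $\mathcal{K}_{kk}^* (p) = (e^{-\alpha_k\cdot\mathbf{p}_k(p)} + \tau_k)^{-1}$ and $\mathcal{K}_{kj}^*$ are equilibria of the stated exponential form satisfying the conservation constraints (individual masses match $f_k^*$, joint momentum and energy match), and assuming all functions take values in the domain of $h_{\tau_k}$ pointwise, one has $\int h_{\tau_1}(f_1^*)\,dp + \int h_{\tau_2}(f_2^*)\,dp \le \int h_{\tau_1}(f_1^\ell)\,dp + \int h_{\tau_2}(f_2^\ell)\,dp$.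 -/
open MeasureTheory
open scoped RealInnerProductSpace

/-- Entropy density `h_τ`. -/
noncomputable def hent (τ z : ℝ) : ℝ :=
  if τ = 0 then z * Real.log z
  else z * Real.log z + τ⁻¹ * ((1 - τ * z) * Real.log (1 - τ * z))

/-- Domain of `h_τ`: `(0,1)` for fermions, `(0,∞)` otherwise. -/
noncomputable def entDom (τ : ℝ) : Set ℝ :=
  if τ = 1 then Set.Ioo 0 1 else Set.Ioi 0

/-!
Backward Euler writes the old state as `f^ℓ = f* + Δt Σ ν (f* - K)`, so the tangent-line
inequality for the convex `h_τ` at `f*` gives `h(f^ℓ) ≥ h(f*) + Δt Σ ν h'(f*) (f* - K)`.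
Since `h'` is increasing, `h'(f*) (f* - K) ≥ h'(K) (f* - K)`, and `h'(K)` is the collision
invariant in the exponent of `K` (plus `1` when `τ = 0`, where `h'(z) = log z + 1`). After
integration, each intra-species term vanishes by the conservation of mass, momentum and energy
of `K_kk`, and the two inter-species terms cancel against each other because `K₁₂` and `K₂₁`
share their momentum and energy multipliers.
-/

namespace Real

theorem sub_le_mul_log_sub_log {x y : ℝ} (hx : 0 < x) (hy : 0 < y) :
    x - y ≤ x * (log x - log y) := by
  have h := mul_le_mul_of_nonneg_left (one_sub_inv_le_log_of_pos (div_pos hx hy)) hx.le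
  rwa [inv_div, mul_sub, mul_one, mul_div_cancel₀ _ hx.ne', log_div hx.ne' hy.ne'] at h

end Real

theorem MonotoneOn.mul_sub_le_mul_sub {s : Set ℝ} {φ : ℝ → ℝ} (hφ : MonotoneOn φ s)
    {a b : ℝ} (ha : a ∈ s) (hb : b ∈ s) : φ b * (a - b) ≤ φ a * (a - b) := by
  rcases le_total b a with hba | hab
  · exact mul_le_mul_of_nonneg_right (hφ hb ha hba) (sub_nonneg.2 hba)
  · exact mul_le_mul_of_nonpos_right (hφ ha hb hab) (sub_nonpos.2 hab)

open Real

theorem mem_entDom_iff {τ z : ℝ} (hτ : τ ∈ ({-1, 0, 1} : Set ℝ)) :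
    z ∈ entDom τ ↔ 0 < z ∧ 0 < 1 - τ * z := by
  rcases hτ with rfl | rfl | rfl
  · norm_num [entDom]
    exact fun hz => by linarith
  · simp [entDom]
  · simp [entDom]

noncomputable def hentDeriv (τ z : ℝ) : ℝ :=
  log z - log (1 - τ * z) + if τ = 0 then 1 else 0

theorem hentDeriv_monotoneOn {τ : ℝ} (hτ : τ ∈ ({-1, 0, 1} : Set ℝ)) :
    MonotoneOn (hentDeriv τ) (entDom τ) := by
  intro w hw z hz hwz
  rw [mem_entDom_iff hτ] at hw hz
  have key : log (w / (1 - τ * w)) ≤ log (z / (1 - τ * z)) := by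
    refine log_le_log (div_pos hw.1 hw.2) ?_
    rw [div_le_div_iff₀ hw.2 hz.2]
    linarith
  rw [log_div hw.1.ne' hw.2.ne', log_div hz.1.ne' hz.2.ne'] at key
  simp only [hentDeriv]
  linarith

theorem hent_add_hentDeriv_mul_le {τ z w : ℝ} (hτ : τ ∈ ({-1, 0, 1} : Set ℝ))
    (hz : z ∈ entDom τ) (hw : w ∈ entDom τ) :
    hent τ w + hentDeriv τ w * (z - w) ≤ hent τ z := by
  rw [mem_entDom_iff hτ] at hz hw
  obtain ⟨hz, hz'⟩ := hz
  obtain ⟨hw, hw'⟩ := hw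
  rcases hτ with rfl | rfl | rfl
  · -- `log t ≤ t - 1` at `t = y / x` (times `z`) and at `t = y`, where `x = z / w` and
    -- `y = (1 + z) / (1 + w)`; the right-hand sides add up to `y (1 + w) - (1 + z) = 0`.
    simp only [hent, hentDeriv, show (-1 : ℝ) ≠ 0 by norm_num, if_false, neg_one_mul,
      sub_neg_eq_add] at *
    have hx : 0 < z / w := div_pos hz hw
    have hy : 0 < (1 + z) / (1 + w) := div_pos hz' hw'
    have h₁ := mul_le_mul_of_nonneg_left (log_le_sub_one_of_pos (div_pos hy hx)) hz.le
    have h₂ := log_le_sub_one_of_pos hy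
    have e₁ : z * ((1 + z) / (1 + w) / (z / w) - 1) = (1 + z) / (1 + w) * w - z := by
      field_simp
    have e₂ : (1 + z) / (1 + w) * (1 + w) = 1 + z := div_mul_cancel₀ _ hw'.ne'
    rw [log_div hy.ne' hx.ne', log_div hz.ne' hw.ne', log_div hz'.ne' hw'.ne', e₁] at h₁
    rw [log_div hz'.ne' hw'.ne'] at h₂
    linear_combination h₁ + h₂ + e₂
  · have := sub_le_mul_log_sub_log hz hw
    simp only [hent, hentDeriv, if_true, zero_mul, sub_zero, log_one]
    linear_combination this
  · have h₁ := sub_le_mul_log_sub_log hz hw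
    have h₂ := sub_le_mul_log_sub_log hz' hw'
    simp only [hent, hentDeriv, one_ne_zero, if_false, inv_one, one_mul, add_zero] at *
    linear_combination h₁ + h₂

theorem hentDeriv_inv_exp_add {τ A : ℝ} (hK : (exp (-A) + τ)⁻¹ ∈ entDom τ) :
    hentDeriv τ (exp (-A) + τ)⁻¹ = A + if τ = 0 then 1 else 0 := by
  have hpos : 0 < (exp (-A) + τ)⁻¹ := by
    unfold entDom at hK
    split_ifs at hK
    exacts [hK.1, hK]
  have hS : exp (-A) + τ ≠ 0 := fun h => by simp [h] at hpos
  have h : 1 - τ * (exp (-A) + τ)⁻¹ = (exp (-A) + τ)⁻¹ * exp (-A) := by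
    field_simp; ring
  rw [hentDeriv, h, log_mul hpos.ne' (exp_ne_zero _), log_exp]
  ring

theorem hent_le_hent_add_relaxation {τ ca cb z l ka kb Aa Ab : ℝ}
    (hτ : τ ∈ ({-1, 0, 1} : Set ℝ)) (hca : 0 ≤ ca) (hcb : 0 ≤ cb)
    (hka : ka = (exp (-Aa) + τ)⁻¹) (hkb : kb = (exp (-Ab) + τ)⁻¹)
    (hl : l = z + ca * (z - ka) + cb * (z - kb))
    (hz : z ∈ entDom τ) (hlD : l ∈ entDom τ) (hkaD : ka ∈ entDom τ) (hkbD : kb ∈ entDom τ) :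
    hent τ z ≤ hent τ l + ca * ((Aa + if τ = 0 then 1 else 0) * (ka - z))
      + cb * ((Ab + if τ = 0 then 1 else 0) * (kb - z)) := by
  have ha := (hentDeriv_monotoneOn hτ).mul_sub_le_mul_sub hkaD hz
  have hb := (hentDeriv_monotoneOn hτ).mul_sub_le_mul_sub hkbD hz
  rw [hka, hentDeriv_inv_exp_add (hka ▸ hkaD), ← hka] at ha
  rw [hkb, hentDeriv_inv_exp_add (hkb ▸ hkbD), ← hkb] at hb
  calc hent τ z ≤ hent τ l - hentDeriv τ z * (l - z) := by
        linarith [hent_add_hentDeriv_mul_le hτ hlD hz]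
    _ = hent τ l + ca * (hentDeriv τ z * (ka - z)) + cb * (hentDeriv τ z * (kb - z)) := by
        rw [hl]; ring
    _ ≤ _ := by gcongr

section Moments

variable {E : Type*} [NormedAddCommGroup E] [InnerProductSpace ℝ E]

/-- The paper's `α · p_k(p)`, with `p_k(p) = (1, p, ‖p‖² / (2 m_k))`. -/
noncomputable def collisionInvariant (m a₀ : ℝ) (a₁ : E) (a₂ : ℝ) (p : E) : ℝ :=
  a₀ + ⟪a₁, p⟫ + a₂ * ‖p‖ ^ 2 / (2 * m)

theorem collisionInvariant_mul (m a₀ : ℝ) (a₁ : E) (a₂ : ℝ) (p : E) (c : ℝ) :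
    collisionInvariant m a₀ a₁ a₂ p * c = a₀ * c + ⟪a₁, c • p⟫ + a₂ * (‖p‖ ^ 2 / (2 * m) * c) := by
  simp only [collisionInvariant, inner_smul_right]
  ring

variable [MeasurableSpace E] {μ : Measure E}

def MomentIntegrable (μ : Measure E) (g : E → ℝ) : Prop :=
  Integrable (fun p => (1 + ‖p‖ ^ 2) * g p) μ ∧ Integrable (fun p => g p • p) μ

namespace MomentIntegrable

variable {f g : E → ℝ}

theorem sub (hf : MomentIntegrable μ f) (hg : MomentIntegrable μ g) :
    MomentIntegrable μ (fun p => f p - g p) := by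
  refine ⟨(hf.1.sub hg.1).congr (.of_forall fun p => ?_),
    (hf.2.sub hg.2).congr (.of_forall fun p => ?_)⟩
  · simp only [Pi.sub_apply]; ring
  · simp only [Pi.sub_apply, sub_smul]

variable [OpensMeasurableSpace E]

theorem integrable (hg : MomentIntegrable μ g) : Integrable g μ := by
  have hw : Continuous fun p : E => (1 + ‖p‖ ^ 2)⁻¹ :=
    (continuous_const.add (continuous_norm.pow 2)).inv₀ fun p =>
      (by positivity : (0 : ℝ) < 1 + ‖p‖ ^ 2).ne'
  refine (hg.1.bdd_mul (c := 1) hw.aestronglyMeasurable (.of_forall fun p => ?_)).congr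
    (.of_forall fun p => ?_)
  · rw [norm_inv, Real.norm_of_nonneg (by positivity)]
    exact inv_le_one_of_one_le₀ (by nlinarith [sq_nonneg ‖p‖])
  · simp only
    field_simp

theorem integrable_energy (hg : MomentIntegrable μ g) (m : ℝ) :
    Integrable (fun p => ‖p‖ ^ 2 / (2 * m) * g p) μ :=
  ((hg.1.sub hg.integrable).const_mul (2 * m)⁻¹).congr
    (.of_forall fun p => by simp only [Pi.sub_apply]; ring)

theorem integrable_collisionInvariant_mul (hg : MomentIntegrable μ g) (m a₀ : ℝ) (a₁ : E)
    (a₂ : ℝ) : Integrable (fun p => collisionInvariant m a₀ a₁ a₂ p * g p) μ := by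
  simp_rw [collisionInvariant_mul]
  exact ((hg.integrable.const_mul a₀).add (hg.2.const_inner a₁)).add
    ((hg.integrable_energy m).const_mul a₂)

theorem integral_collisionInvariant_mul [CompleteSpace E] (hg : MomentIntegrable μ g)
    (m a₀ : ℝ) (a₁ : E) (a₂ : ℝ) :
    ∫ p, collisionInvariant m a₀ a₁ a₂ p * g p ∂μ =
      a₀ * ∫ p, g p ∂μ + ⟪a₁, ∫ p, g p • p ∂μ⟫ + a₂ * ∫ p, ‖p‖ ^ 2 / (2 * m) * g p ∂μ := by
  have hmass : Integrable (fun p => a₀ * g p) μ := hg.integrable.const_mul a₀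
  have hmom : Integrable (fun p => ⟪a₁, g p • p⟫) μ := hg.2.const_inner a₁
  have hmassMom : Integrable (fun p => a₀ * g p + ⟪a₁, g p • p⟫) μ := hmass.add hmom
  simp_rw [collisionInvariant_mul]
  rw [integral_add hmassMom ((hg.integrable_energy m).const_mul a₂), integral_add hmass hmom,
    integral_const_mul, integral_const_mul, integral_inner hg.2]

end MomentIntegrable

variable [OpensMeasurableSpace E]

theorem integral_collisionInvariant_mul_sub_eq_zero [CompleteSpace E]
    {m a₀ a₂ : ℝ} {a₁ : E} {f K : E → ℝ} (hK : MomentIntegrable μ K)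
    (hf : MomentIntegrable μ f) (h₀ : ∫ p, K p ∂μ = ∫ p, f p ∂μ)
    (h₁ : ∫ p, K p • p ∂μ = ∫ p, f p • p ∂μ)
    (h₂ : ∫ p, ‖p‖ ^ 2 / (2 * m) * K p ∂μ = ∫ p, ‖p‖ ^ 2 / (2 * m) * f p ∂μ) :
    ∫ p, collisionInvariant m a₀ a₁ a₂ p * (K p - f p) ∂μ = 0 := by
  simp only [mul_sub]
  rw [integral_sub (hK.integrable_collisionInvariant_mul m a₀ a₁ a₂)
    (hf.integrable_collisionInvariant_mul m a₀ a₁ a₂), hK.integral_collisionInvariant_mul,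
    hf.integral_collisionInvariant_mul, h₀, h₁, h₂, sub_self]

theorem add_integral_collisionInvariant_mul_sub_eq_zero [CompleteSpace E]
    {m₁ m₂ a₁₀ a₂₀ ν₁ ν₂ b : ℝ} {v : E} {f₁ K₁ f₂ K₂ : E → ℝ}
    (hK₁ : MomentIntegrable μ K₁) (hf₁ : MomentIntegrable μ f₁)
    (hK₂ : MomentIntegrable μ K₂) (hf₂ : MomentIntegrable μ f₂)
    (hmass₁ : ∫ p, K₁ p ∂μ = ∫ p, f₁ p ∂μ) (hmass₂ : ∫ p, K₂ p ∂μ = ∫ p, f₂ p ∂μ)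
    (hmom : ν₁ • ∫ p, (K₁ p - f₁ p) • p ∂μ + ν₂ • ∫ p, (K₂ p - f₂ p) • p ∂μ = 0)
    (hen : ν₁ * ∫ p, ‖p‖ ^ 2 / (2 * m₁) * (K₁ p - f₁ p) ∂μ +
      ν₂ * ∫ p, ‖p‖ ^ 2 / (2 * m₂) * (K₂ p - f₂ p) ∂μ = 0) :
    ν₁ * ∫ p, collisionInvariant m₁ a₁₀ v b p * (K₁ p - f₁ p) ∂μ +
      ν₂ * ∫ p, collisionInvariant m₂ a₂₀ v b p * (K₂ p - f₂ p) ∂μ = 0 := by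
  have hmass₁' : ∫ p, K₁ p - f₁ p ∂μ = 0 := by
    rw [integral_sub hK₁.integrable hf₁.integrable, hmass₁, sub_self]
  have hmass₂' : ∫ p, K₂ p - f₂ p ∂μ = 0 := by
    rw [integral_sub hK₂.integrable hf₂.integrable, hmass₂, sub_self]
  have hmom' := congrArg (⟪v, ·⟫) hmom
  simp only [inner_add_right, inner_smul_right, inner_zero_right] at hmom'
  rw [(hK₁.sub hf₁).integral_collisionInvariant_mul,
    (hK₂.sub hf₂).integral_collisionInvariant_mul, hmass₁', hmass₂']
  linear_combination hmom' + b * hen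

theorem integral_hent_le_add_relaxation
    {τ Δt νa νb d m a₀ a₂ b₀ b₂ : ℝ} {a₁ b₁ : E} {fl fs Ka Kb : E → ℝ}
    (hτ : τ ∈ ({-1, 0, 1} : Set ℝ)) (hΔt : 0 ≤ Δt) (hνa : 0 ≤ νa) (hνb : 0 ≤ νb)
    (hd : d = (1 + Δt * (νa + νb))⁻¹)
    (hKa : ∀ p, Ka p = (exp (-collisionInvariant m a₀ a₁ a₂ p) + τ)⁻¹)
    (hKb : ∀ p, Kb p = (exp (-collisionInvariant m b₀ b₁ b₂ p) + τ)⁻¹)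
    (hup : ∀ p, fs p = d * fl p + d * Δt * (νa * Ka p + νb * Kb p))
    (hdom : ∀ p, fl p ∈ entDom τ ∧ fs p ∈ entDom τ ∧ Ka p ∈ entDom τ ∧ Kb p ∈ entDom τ)
    (hfl : Integrable (fun p => hent τ (fl p)) μ) (hfs : Integrable (fun p => hent τ (fs p)) μ)
    (hfsM : MomentIntegrable μ fs) (hKaM : MomentIntegrable μ Ka)
    (hKbM : MomentIntegrable μ Kb) :
    ∫ p, hent τ (fs p) ∂μ ≤ ∫ p, hent τ (fl p) ∂μ
      + Δt * νa * ∫ p, collisionInvariant m (a₀ + if τ = 0 then 1 else 0) a₁ a₂ p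
          * (Ka p - fs p) ∂μ
      + Δt * νb * ∫ p, collisionInvariant m (b₀ + if τ = 0 then 1 else 0) b₁ b₂ p
          * (Kb p - fs p) ∂μ := by
  set c : ℝ := if τ = 0 then 1 else 0
  have hshift : ∀ (a₀ a₂ : ℝ) (a₁ p : E),
      collisionInvariant m (a₀ + c) a₁ a₂ p = collisionInvariant m a₀ a₁ a₂ p + c :=
    fun _ _ _ _ => by simp only [collisionInvariant]; ring
  have hpre : ∀ p, fl p = fs p + Δt * νa * (fs p - Ka p) + Δt * νb * (fs p - Kb p) := by
    intro p
    have hpos : 0 < 1 + Δt * (νa + νb) := by positivity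
    have h := hup p
    rw [hd] at h
    field_simp at h
    linarith
  have hpoint : ∀ p, hent τ (fs p) ≤ hent τ (fl p)
      + Δt * νa * (collisionInvariant m (a₀ + c) a₁ a₂ p * (Ka p - fs p))
      + Δt * νb * (collisionInvariant m (b₀ + c) b₁ b₂ p * (Kb p - fs p)) := by
    intro p
    obtain ⟨hflD, hfsD, hKaD, hKbD⟩ := hdom p
    rw [hshift, hshift]
    exact hent_le_hent_add_relaxation hτ (mul_nonneg hΔt hνa) (mul_nonneg hΔt hνb) (hKa p)
      (hKb p) (hpre p) hfsD hflD hKaD hKbD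
  have hIa : Integrable (fun p => Δt * νa *
      (collisionInvariant m (a₀ + c) a₁ a₂ p * (Ka p - fs p))) μ :=
    ((hKaM.sub hfsM).integrable_collisionInvariant_mul m (a₀ + c) a₁ a₂).const_mul (Δt * νa)
  have hIb : Integrable (fun p => Δt * νb *
      (collisionInvariant m (b₀ + c) b₁ b₂ p * (Kb p - fs p))) μ :=
    ((hKbM.sub hfsM).integrable_collisionInvariant_mul m (b₀ + c) b₁ b₂).const_mul (Δt * νb)
  have hflIa : Integrable (fun p => hent τ (fl p) + Δt * νa *
      (collisionInvariant m (a₀ + c) a₁ a₂ p * (Ka p - fs p))) μ := hfl.add hIa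
  calc ∫ p, hent τ (fs p) ∂μ
      ≤ ∫ p, hent τ (fl p) + Δt * νa * (collisionInvariant m (a₀ + c) a₁ a₂ p * (Ka p - fs p))
          + Δt * νb * (collisionInvariant m (b₀ + c) b₁ b₂ p * (Kb p - fs p)) ∂μ :=
        integral_mono hfs (hflIa.add hIb) hpoint
    _ = _ := by
      rw [integral_add hflIa hIb, integral_add hfl hIa, integral_const_mul, integral_const_mul]

end Moments

theorem stmt_13_general (τ₁ τ₂ : ℝ)
    (hτ₁ : τ₁ ∈ ({-1, 0, 1} : Set ℝ)) (hτ₂ : τ₂ ∈ ({-1, 0, 1} : Set ℝ))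
    (m₁ m₂ Δt ν₁₁ ν₂₂ ν₁₂ ν₂₁ d₁ d₂ : ℝ)
    (hΔt : 0 < Δt)
    (hν₁₁ : 0 < ν₁₁) (hν₂₂ : 0 < ν₂₂) (hν₁₂ : 0 < ν₁₂) (hν₂₁ : 0 < ν₂₁)
    (hd₁ : d₁ = (1 + Δt * (ν₁₁ + ν₁₂))⁻¹) (hd₂ : d₂ = (1 + Δt * (ν₂₂ + ν₂₁))⁻¹)
    (f₁l f₂l f₁s f₂s K₁₁ K₂₂ K₁₂ K₂₁ : EuclideanSpace ℝ (Fin 3) → ℝ)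
    -- equilibria of exponential form, with shared inter-species multipliers
    (a₁0 a₁2 a₂0 a₂2 b₁0 b₂0 b2 : ℝ) (a₁1 a₂1 b1 : EuclideanSpace ℝ (Fin 3))
    (hK₁₁ : ∀ p, K₁₁ p =
      (Real.exp (-(a₁0 + ⟪a₁1, p⟫ + a₁2 * ‖p‖ ^ 2 / (2 * m₁))) + τ₁)⁻¹)
    (hK₂₂ : ∀ p, K₂₂ p =
      (Real.exp (-(a₂0 + ⟪a₂1, p⟫ + a₂2 * ‖p‖ ^ 2 / (2 * m₂))) + τ₂)⁻¹)
    (hK₁₂ : ∀ p, K₁₂ p =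
      (Real.exp (-(b₁0 + ⟪b1, p⟫ + b2 * ‖p‖ ^ 2 / (2 * m₁))) + τ₁)⁻¹)
    (hK₂₁ : ∀ p, K₂₁ p =
      (Real.exp (-(b₂0 + ⟪b1, p⟫ + b2 * ‖p‖ ^ 2 / (2 * m₂))) + τ₂)⁻¹)
    -- implicit relaxation update
    (hup₁ : ∀ p, f₁s p = d₁ * f₁l p + d₁ * Δt * (ν₁₁ * K₁₁ p + ν₁₂ * K₁₂ p))
    (hup₂ : ∀ p, f₂s p = d₂ * f₂l p + d₂ * Δt * (ν₂₂ * K₂₂ p + ν₂₁ * K₂₁ p))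
    -- all functions take values in the domain of the respective entropy
    (hdom₁ : ∀ p, f₁l p ∈ entDom τ₁ ∧ f₁s p ∈ entDom τ₁ ∧
      K₁₁ p ∈ entDom τ₁ ∧ K₁₂ p ∈ entDom τ₁)
    (hdom₂ : ∀ p, f₂l p ∈ entDom τ₂ ∧ f₂s p ∈ entDom τ₂ ∧
      K₂₂ p ∈ entDom τ₂ ∧ K₂₁ p ∈ entDom τ₂)
    -- integrability of all entropy integrands and moments
    (hint₁ : ∀ g ∈ [f₁l, f₁s, K₁₁, K₁₂],
      Integrable (fun p : EuclideanSpace ℝ (Fin 3) => hent τ₁ (g p)) ∧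
      Integrable (fun p : EuclideanSpace ℝ (Fin 3) => (1 + ‖p‖ ^ 2) * g p) ∧
      Integrable (fun p : EuclideanSpace ℝ (Fin 3) => g p • p))
    (hint₂ : ∀ g ∈ [f₂l, f₂s, K₂₂, K₂₁],
      Integrable (fun p : EuclideanSpace ℝ (Fin 3) => hent τ₂ (g p)) ∧
      Integrable (fun p : EuclideanSpace ℝ (Fin 3) => (1 + ‖p‖ ^ 2) * g p) ∧
      Integrable (fun p : EuclideanSpace ℝ (Fin 3) => g p • p))
    -- intra-species conservation constraints
    (hc₁₁0 : (∫ p : EuclideanSpace ℝ (Fin 3), K₁₁ p) = ∫ p : EuclideanSpace ℝ (Fin 3), f₁s p)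
    (hc₁₁1 : (∫ p : EuclideanSpace ℝ (Fin 3), K₁₁ p • p) =
      ∫ p : EuclideanSpace ℝ (Fin 3), f₁s p • p)
    (hc₁₁2 : (∫ p : EuclideanSpace ℝ (Fin 3), ‖p‖ ^ 2 / (2 * m₁) * K₁₁ p) =
      ∫ p : EuclideanSpace ℝ (Fin 3), ‖p‖ ^ 2 / (2 * m₁) * f₁s p)
    (hc₂₂0 : (∫ p : EuclideanSpace ℝ (Fin 3), K₂₂ p) = ∫ p : EuclideanSpace ℝ (Fin 3), f₂s p)
    (hc₂₂1 : (∫ p : EuclideanSpace ℝ (Fin 3), K₂₂ p • p) =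
      ∫ p : EuclideanSpace ℝ (Fin 3), f₂s p • p)
    (hc₂₂2 : (∫ p : EuclideanSpace ℝ (Fin 3), ‖p‖ ^ 2 / (2 * m₂) * K₂₂ p) =
      ∫ p : EuclideanSpace ℝ (Fin 3), ‖p‖ ^ 2 / (2 * m₂) * f₂s p)
    -- inter-species conservation constraints
    (hc₁₂0 : (∫ p : EuclideanSpace ℝ (Fin 3), K₁₂ p) = ∫ p : EuclideanSpace ℝ (Fin 3), f₁s p)
    (hc₂₁0 : (∫ p : EuclideanSpace ℝ (Fin 3), K₂₁ p) = ∫ p : EuclideanSpace ℝ (Fin 3), f₂s p)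
    (hcmom : ν₁₂ • (∫ p : EuclideanSpace ℝ (Fin 3), (K₁₂ p - f₁s p) • p) +
      ν₂₁ • (∫ p : EuclideanSpace ℝ (Fin 3), (K₂₁ p - f₂s p) • p) = 0)
    (hcen : ν₁₂ * (∫ p : EuclideanSpace ℝ (Fin 3), ‖p‖ ^ 2 / (2 * m₁) * (K₁₂ p - f₁s p)) +
      ν₂₁ * (∫ p : EuclideanSpace ℝ (Fin 3), ‖p‖ ^ 2 / (2 * m₂) * (K₂₁ p - f₂s p)) = 0) :
    (∫ p : EuclideanSpace ℝ (Fin 3), hent τ₁ (f₁s p)) +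
        (∫ p : EuclideanSpace ℝ (Fin 3), hent τ₂ (f₂s p)) ≤
      (∫ p : EuclideanSpace ℝ (Fin 3), hent τ₁ (f₁l p)) +
        (∫ p : EuclideanSpace ℝ (Fin 3), hent τ₂ (f₂l p)) := by
  simp only [List.mem_cons, List.not_mem_nil, or_false, forall_eq_or_imp, forall_eq]
    at hint₁ hint₂
  obtain ⟨⟨h₁l, -⟩, ⟨h₁s, M₁s⟩, ⟨-, M₁₁⟩, ⟨-, M₁₂⟩⟩ := hint₁
  obtain ⟨⟨h₂l, -⟩, ⟨h₂s, M₂s⟩, ⟨-, M₂₂⟩, ⟨-, M₂₁⟩⟩ := hint₂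
  have H₁ := integral_hent_le_add_relaxation hτ₁ hΔt.le hν₁₁.le hν₁₂.le hd₁ hK₁₁ hK₁₂ hup₁
    hdom₁ h₁l h₁s M₁s M₁₁ M₁₂
  have H₂ := integral_hent_le_add_relaxation hτ₂ hΔt.le hν₂₂.le hν₂₁.le hd₂ hK₂₂ hK₂₁ hup₂
    hdom₂ h₂l h₂s M₂s M₂₂ M₂₁
  rw [integral_collisionInvariant_mul_sub_eq_zero M₁₁ M₁s hc₁₁0 hc₁₁1 hc₁₁2] at H₁
  rw [integral_collisionInvariant_mul_sub_eq_zero M₂₂ M₂s hc₂₂0 hc₂₂1 hc₂₂2] at H₂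
  have hcross := add_integral_collisionInvariant_mul_sub_eq_zero
    (a₁₀ := b₁0 + if τ₁ = 0 then 1 else 0) (a₂₀ := b₂0 + if τ₂ = 0 then 1 else 0) (v := b1)
    (b := b2) M₁₂ M₁s M₂₁ M₂s hc₁₂0 hc₂₁0 hcmom hcen
  linear_combination H₁ + H₂ + Δt * hcross

/-- Discrete H-theorem for the backward-Euler relaxation step. -/
theorem stmt_13 (τ₁ τ₂ : ℝ)
    (hτ₁ : τ₁ ∈ ({-1, 0, 1} : Set ℝ)) (hτ₂ : τ₂ ∈ ({-1, 0, 1} : Set ℝ))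
    (m₁ m₂ Δt ν₁₁ ν₂₂ ν₁₂ ν₂₁ d₁ d₂ : ℝ)
    (hm₁ : 0 < m₁) (hm₂ : 0 < m₂) (hΔt : 0 < Δt)
    (hν₁₁ : 0 < ν₁₁) (hν₂₂ : 0 < ν₂₂) (hν₁₂ : 0 < ν₁₂) (hν₂₁ : 0 < ν₂₁)
    (hrec : ν₁₂ = ν₂₁)
    (hd₁ : d₁ = (1 + Δt * (ν₁₁ + ν₁₂))⁻¹) (hd₂ : d₂ = (1 + Δt * (ν₂₂ + ν₂₁))⁻¹)
    (f₁l f₂l f₁s f₂s K₁₁ K₂₂ K₁₂ K₂₁ : EuclideanSpace ℝ (Fin 3) → ℝ)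
    -- equilibria of exponential form, with shared inter-species multipliers
    (a₁0 a₁2 a₂0 a₂2 b₁0 b₂0 b2 : ℝ) (a₁1 a₂1 b1 : EuclideanSpace ℝ (Fin 3))
    (hK₁₁ : ∀ p, K₁₁ p =
      (Real.exp (-(a₁0 + ⟪a₁1, p⟫ + a₁2 * ‖p‖ ^ 2 / (2 * m₁))) + τ₁)⁻¹)
    (hK₂₂ : ∀ p, K₂₂ p =
      (Real.exp (-(a₂0 + ⟪a₂1, p⟫ + a₂2 * ‖p‖ ^ 2 / (2 * m₂))) + τ₂)⁻¹)
    (hK₁₂ : ∀ p, K₁₂ p =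
      (Real.exp (-(b₁0 + ⟪b1, p⟫ + b2 * ‖p‖ ^ 2 / (2 * m₁))) + τ₁)⁻¹)
    (hK₂₁ : ∀ p, K₂₁ p =
      (Real.exp (-(b₂0 + ⟪b1, p⟫ + b2 * ‖p‖ ^ 2 / (2 * m₂))) + τ₂)⁻¹)
    -- implicit relaxation update
    (hup₁ : ∀ p, f₁s p = d₁ * f₁l p + d₁ * Δt * (ν₁₁ * K₁₁ p + ν₁₂ * K₁₂ p))
    (hup₂ : ∀ p, f₂s p = d₂ * f₂l p + d₂ * Δt * (ν₂₂ * K₂₂ p + ν₂₁ * K₂₁ p))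
    -- all functions take values in the domain of the respective entropy
    (hdom₁ : ∀ p, f₁l p ∈ entDom τ₁ ∧ f₁s p ∈ entDom τ₁ ∧
      K₁₁ p ∈ entDom τ₁ ∧ K₁₂ p ∈ entDom τ₁)
    (hdom₂ : ∀ p, f₂l p ∈ entDom τ₂ ∧ f₂s p ∈ entDom τ₂ ∧
      K₂₂ p ∈ entDom τ₂ ∧ K₂₁ p ∈ entDom τ₂)
    -- integrability of all entropy integrands and moments
    (hint₁ : ∀ g ∈ [f₁l, f₁s, K₁₁, K₁₂],
      Integrable (fun p : EuclideanSpace ℝ (Fin 3) => hent τ₁ (g p)) ∧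
      Integrable (fun p : EuclideanSpace ℝ (Fin 3) => (1 + ‖p‖ ^ 2) * g p) ∧
      Integrable (fun p : EuclideanSpace ℝ (Fin 3) => g p • p))
    (hint₂ : ∀ g ∈ [f₂l, f₂s, K₂₂, K₂₁],
      Integrable (fun p : EuclideanSpace ℝ (Fin 3) => hent τ₂ (g p)) ∧
      Integrable (fun p : EuclideanSpace ℝ (Fin 3) => (1 + ‖p‖ ^ 2) * g p) ∧
      Integrable (fun p : EuclideanSpace ℝ (Fin 3) => g p • p))
    -- intra-species conservation constraints
    (hc₁₁0 : (∫ p : EuclideanSpace ℝ (Fin 3), K₁₁ p) = ∫ p : EuclideanSpace ℝ (Fin 3), f₁s p)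
    (hc₁₁1 : (∫ p : EuclideanSpace ℝ (Fin 3), K₁₁ p • p) =
      ∫ p : EuclideanSpace ℝ (Fin 3), f₁s p • p)
    (hc₁₁2 : (∫ p : EuclideanSpace ℝ (Fin 3), ‖p‖ ^ 2 / (2 * m₁) * K₁₁ p) =
      ∫ p : EuclideanSpace ℝ (Fin 3), ‖p‖ ^ 2 / (2 * m₁) * f₁s p)
    (hc₂₂0 : (∫ p : EuclideanSpace ℝ (Fin 3), K₂₂ p) = ∫ p : EuclideanSpace ℝ (Fin 3), f₂s p)
    (hc₂₂1 : (∫ p : EuclideanSpace ℝ (Fin 3), K₂₂ p • p) =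
      ∫ p : EuclideanSpace ℝ (Fin 3), f₂s p • p)
    (hc₂₂2 : (∫ p : EuclideanSpace ℝ (Fin 3), ‖p‖ ^ 2 / (2 * m₂) * K₂₂ p) =
      ∫ p : EuclideanSpace ℝ (Fin 3), ‖p‖ ^ 2 / (2 * m₂) * f₂s p)
    -- inter-species conservation constraints
    (hc₁₂0 : (∫ p : EuclideanSpace ℝ (Fin 3), K₁₂ p) = ∫ p : EuclideanSpace ℝ (Fin 3), f₁s p)
    (hc₂₁0 : (∫ p : EuclideanSpace ℝ (Fin 3), K₂₁ p) = ∫ p : EuclideanSpace ℝ (Fin 3), f₂s p)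
    (hcmom : ν₁₂ • (∫ p : EuclideanSpace ℝ (Fin 3), (K₁₂ p - f₁s p) • p) +
      ν₂₁ • (∫ p : EuclideanSpace ℝ (Fin 3), (K₂₁ p - f₂s p) • p) = 0)
    (hcen : ν₁₂ * (∫ p : EuclideanSpace ℝ (Fin 3), ‖p‖ ^ 2 / (2 * m₁) * (K₁₂ p - f₁s p)) +
      ν₂₁ * (∫ p : EuclideanSpace ℝ (Fin 3), ‖p‖ ^ 2 / (2 * m₂) * (K₂₁ p - f₂s p)) = 0) :
    (∫ p : EuclideanSpace ℝ (Fin 3), hent τ₁ (f₁s p)) +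
        (∫ p : EuclideanSpace ℝ (Fin 3), hent τ₂ (f₂s p)) ≤
      (∫ p : EuclideanSpace ℝ (Fin 3), hent τ₁ (f₁l p)) +
        (∫ p : EuclideanSpace ℝ (Fin 3), hent τ₂ (f₂l p)) :=
  stmt_13_general τ₁ τ₂ hτ₁ hτ₂ m₁ m₂ Δt ν₁₁ ν₂₂ ν₁₂ ν₂₁ d₁ d₂ hΔt hν₁₁ hν₂₂ hν₁₂ hν₂₁ hd₁ hd₂ f₁l
    f₂l f₁s f₂s K₁₁ K₂₂ K₁₂ K₂₁ a₁0 a₁2 a₂0 a₂2 b₁0 b₂0 b2 a₁1 a₂1 b1 hK₁₁ hK₂₂ hK₁₂ hK₂₁ hup₁ hup₂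
    hdom₁ hdom₂ hint₁ hint₂ hc₁₁0 hc₁₁1 hc₁₁2 hc₂₂0 hc₂₂1 hc₂₂2 hc₁₂0 hc₂₁0 hcmom hcen
end
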